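/- arXiv:2311.07555 — 4 statements merged into one kernel-verified Lean document; each statement's English description precedes it below -/
import Mathlib

section
/- Let h : ℝ → ℝ satisfy |h(s₁) − h(s₂)| ≤ |s₁ − s₂| for all s₁, s₂, let s⁻ ≤ s⁺, and suppose s⁺ − s⁻ ≤ h(s⁻) + h(s⁺). Then ŝ := ½(s⁻ + s⁺ + h(s⁻) − h(s⁺)) satisfies |s − ŝ| ≤ h(s) for every s ∈ [s⁻, s⁺]. -/
theorem stmt3 (h : ℝ → ℝ) (hlip : ∀ s₁ s₂ : ℝ, |h s₁ - h s₂| ≤ |s₁ - s₂|)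
    (sm sp : ℝ) (hle : sm ≤ sp) (hsc : sp - sm ≤ h sm + h sp) :
    ∀ s ∈ Set.Icc sm sp,
      |s - (1 / 2) * (sm + sp + h sm - h sp)| ≤ h s := by
  intro s hs
  obtain ⟨h1, h2⟩ := hs
  have a1 := abs_le.1 (hlip s sm)
  have a2 := abs_le.1 (hlip s sp)
  rw [abs_of_nonneg (by linarith : (0:ℝ) ≤ s - sm)] at a1
  rw [abs_of_nonpos (by linarith : s - sp ≤ 0)] at a2
  rw [abs_le]
  constructor <;> nlinarith [a1.1, a1.2, a2.1, a2.2]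
end

section
/- Let h : ℝ → ℝ be 1-Lipschitz with h ≥ 0, let s⁻ < s⁺, and set ŝ* := ½(s⁻ + s⁺ + h(s⁻) − h(s⁺)). Then for every real ŝ, sup_{s ∈ [s⁻,s⁺]} (|s − ŝ*| − h(s)) ≤ sup_{s ∈ [s⁻,s⁺]} (|s − ŝ| − h(s)). -/
theorem stmt5 (h : ℝ → ℝ) (hlip : LipschitzWith 1 h) (hpos : ∀ s, 0 ≤ h s)
    (sm sp : ℝ) (hlt : sm < sp) (shat : ℝ) :
    sSup ((fun s => |s - (1 / 2) * (sm + sp + h sm - h sp)| - h s) '' Set.Icc sm sp)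
      ≤ sSup ((fun s => |s - shat| - h s) '' Set.Icc sm sp) := by
  have lip : ∀ a b : ℝ, |h a - h b| ≤ |a - b| := by
    intro a b
    have := hlip.dist_le_mul a b
    simpa [Real.dist_eq] using this
  set V : ℝ := (sp - sm - h sm - h sp) / 2 with hV
  set c : ℝ := (1 / 2) * (sm + sp + h sm - h sp) with hc
  have hlip_sm_sp := abs_le.1 (lip sm sp)
  have habs_sm_sp : |sm - sp| = sp - sm := by rw [abs_of_nonpos (by linarith)]; ring
  rw [habs_sm_sp] at hlip_sm_sp
  -- Upper bound: LHS ≤ V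
  have hub : sSup ((fun s => |s - c| - h s) '' Set.Icc sm sp) ≤ V := by
    apply csSup_le (Set.Nonempty.image _ ⟨sm, Set.mem_Icc.2 ⟨le_refl _, le_of_lt hlt⟩⟩)
    rintro x ⟨s, hs, rfl⟩
    obtain ⟨hs1, hs2⟩ := Set.mem_Icc.1 hs
    have l1 := abs_le.1 (lip s sm)
    have habs1 : |s - sm| = s - sm := abs_of_nonneg (by linarith)
    rw [habs1] at l1
    have l2 := abs_le.1 (lip s sp)
    have habs2 : |s - sp| = sp - s := by rw [abs_of_nonpos (by linarith)]; ring
    rw [habs2] at l2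
    rcases abs_cases (s - c) with ⟨he, _⟩ | ⟨he, _⟩ <;>
      simp only [he, hc, hV] <;> [linarith [l2.1, l2.2]; linarith [l1.1, l1.2]]
  refine hub.trans ?_
  -- Lower bound: V ≤ RHS
  have hbdd : BddAbove ((fun s => |s - shat| - h s) '' Set.Icc sm sp) := by
    apply IsCompact.bddAbove_image isCompact_Icc
    exact ((continuous_id.sub continuous_const).abs.sub hlip.continuous).continuousOn
  have hmem1 : |sm - shat| - h sm ∈ (fun s => |s - shat| - h s) '' Set.Icc sm sp :=
    ⟨sm, Set.mem_Icc.2 ⟨le_refl _, le_of_lt hlt⟩, rfl⟩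
  have hmem2 : |sp - shat| - h sp ∈ (fun s => |s - shat| - h s) '' Set.Icc sm sp :=
    ⟨sp, Set.mem_Icc.2 ⟨le_of_lt hlt, le_refl _⟩, rfl⟩
  have htri : sp - sm ≤ |sm - shat| + |sp - shat| := by
    have h1 := abs_sub_le sp shat sm
    have h2 : |shat - sm| = |sm - shat| := abs_sub_comm _ _
    have h3 : sp - sm ≤ |sp - sm| := le_abs_self _
    linarith
  by_cases hcase : V ≤ |sm - shat| - h sm
  · exact hcase.trans (le_csSup hbdd hmem1)
  · have : V ≤ |sp - shat| - h sp := by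
      push_neg at hcase
      simp only [hV] at hcase ⊢
      linarith
    exact this.trans (le_csSup hbdd hmem2)
end

section
/- Let h be 1-Lipschitz with h ≥ 0, s⁻ < s⁺, and ŝ* = ½(s⁻ + s⁺ + h(s⁻) − h(s⁺)). Then the worst-case excess error satisfies 2·sup_{s ∈ [s⁻,s⁺]} (|s − ŝ*| − h(s)) = s⁺ − s⁻ − h(s⁻) − h(s⁺). -/
theorem stmt6 (h : ℝ → ℝ) (hlip : LipschitzWith 1 h) (hpos : ∀ s, 0 ≤ h s)
    (sm sp : ℝ) (hlt : sm < sp) :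
    2 * sSup ((fun s => |s - (1 / 2) * (sm + sp + h sm - h sp)| - h s) '' Set.Icc sm sp)
      = sp - sm - h sm - h sp := by
  have key : ∀ a b : ℝ, |h a - h b| ≤ |a - b| := by
    intro a b
    have := hlip.dist_le_mul a b
    simpa [Real.dist_eq] using this
  set c := (1 / 2) * (sm + sp + h sm - h sp) with hc
  set M := (sp - sm - h sm - h sp) / 2 with hM
  have h1 : h sm - h sp ≤ sp - sm := by
    have := (abs_le.mp (key sm sp)).2
    rw [abs_of_nonpos (by linarith : sm - sp ≤ 0)] at this
    linarith
  have h2 : h sp - h sm ≤ sp - sm := by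
    have := (abs_le.mp (key sp sm)).2
    rw [abs_of_nonneg (by linarith : (0:ℝ) ≤ sp - sm)] at this
    linarith
  have hmem : M ∈ ((fun s => |s - c| - h s) '' Set.Icc sm sp) := by
    refine ⟨sm, ⟨le_refl _, le_of_lt hlt⟩, ?_⟩
    have : |sm - c| = c - sm := by
      rw [abs_of_nonpos (by rw [hc]; linarith)]
      ring
    simp only; rw [this, hc, hM]; ring
  have hub : ∀ y ∈ ((fun s => |s - c| - h s) '' Set.Icc sm sp), y ≤ M := by
    rintro y ⟨s, ⟨hs1, hs2⟩, rfl⟩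
    simp only
    rcases le_total s c with hsc | hsc
    · have hk : h sm - h s ≤ s - sm := by
        have := (abs_le.mp (key sm s)).2
        rw [abs_of_nonpos (by linarith : sm - s ≤ 0)] at this
        linarith
      rw [abs_of_nonpos (by linarith : s - c ≤ 0)]
      rw [hc] at hsc ⊢; rw [hM]; linarith
    · have hk : h sp - h s ≤ sp - s := by
        have := (abs_le.mp (key sp s)).2
        rw [abs_of_nonneg (by linarith : (0:ℝ) ≤ sp - s)] at this
        linarith
      rw [abs_of_nonneg (by linarith : (0:ℝ) ≤ s - c)]
      rw [hc] at hsc ⊢; rw [hM]; linarith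
  have : sSup ((fun s => |s - c| - h s) '' Set.Icc sm sp) = M := by
    apply le_antisymm
    · exact csSup_le ⟨M, hmem⟩ hub
    · exact le_csSup ⟨M, hub⟩ hmem
  rw [this, hM]; ring
end

section
/- Let h : ℝ → ℝ be 1-Lipschitz with h ≥ 0, and let s⁻ ≤ s⁺ satisfy s⁺ − s⁻ ≤ h(s⁻) + h(s⁺). Then there exists ŝ ∈ [s⁻, s⁺] such that |s − ŝ| ≤ h(s) for all s ∈ [s⁻, s⁺], and conversely if such ŝ ∈ ℝ exists then s⁺ − s⁻ ≤ h(s⁻) + h(s⁺). -/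
theorem stmt16 (h : ℝ → ℝ) (hlip : LipschitzWith 1 h) (hpos : ∀ s, 0 ≤ h s)
    (sm sp : ℝ) (hle : sm ≤ sp) :
    (sp - sm ≤ h sm + h sp →
      ∃ shat ∈ Set.Icc sm sp, ∀ s ∈ Set.Icc sm sp, |s - shat| ≤ h s) ∧
    ((∃ shat : ℝ, ∀ s ∈ Set.Icc sm sp, |s - shat| ≤ h s) →
      sp - sm ≤ h sm + h sp) := by
  have lip : ∀ a b : ℝ, |h a - h b| ≤ |a - b| := by
    intro a b
    have := hlip.dist_le_mul a b
    simpa [Real.dist_eq] using this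
  constructor
  · intro hstop
    refine ⟨min (sm + h sm) sp, ⟨le_min (by linarith [hpos sm]) hle, min_le_right _ _⟩, ?_⟩
    rintro s ⟨hs1, hs2⟩
    have l1 := abs_le.1 (lip s sm)
    have l2 := abs_le.1 (lip s sp)
    rw [abs_le]
    constructor
    · have : min (sm + h sm) sp ≤ sm + h sm := min_le_left _ _
      have h1 : |s - sm| = s - sm := abs_of_nonneg (by linarith)
      rw [h1] at l1
      linarith [l1.1]
    · rcases le_or_gt (sm + h sm) sp with hc | hc
      · rw [min_eq_left hc]
        have h2 : |s - sp| = sp - s := by rw [abs_sub_comm]; exact abs_of_nonneg (by linarith)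
        rw [h2] at l2
        linarith [l2.1]
      · rw [min_eq_right hc.le]
        linarith [hpos s]
  · rintro ⟨shat, hsh⟩
    have h1 := abs_le.1 (hsh sm ⟨le_refl _, hle⟩)
    have h2 := abs_le.1 (hsh sp ⟨hle, le_refl _⟩)
    linarith [h1.1, h2.2]
end
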